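/- arXiv:1503.07243 — 4 statements merged into one kernel-verified Lean document; each statement's English description precedes it below -/
import Mathlib

section
/- Let F be a finite field extension of a finite field k, M a k-module, and N a finite-dimensional F-vector space. Then the map sending an F-linear map f : N → F ⊗_k M to (tr_{F/k} ⊗ id_M) ∘ f is an F-linear isomorphism Hom_F(N, F ⊗_k M) ≅ Hom_k(N, M). -/
/-!
The trace form of the finite separable extension `F/k` is nondegenerate, so `x ↦ (c ↦ tr(c • x))`
identifies `F ⊗_k M` with `Hom_k(F, M)` (via `F ≅ Hom_k(F, k)`). Hence an `F`-linear
`f : N → F ⊗_k M` is determined by the `k`-linear maps `c ↦ tr(f (c • v)) = g (c • v)` where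
`g = tr ∘ f`; conversely every `k`-linear `g` arises, taking for `f v` the element whose
trace pairing is `c ↦ g (c • v)`.
-/

open TensorProduct

/-- The map `tr_{F/k} ⊗ id_M : F ⊗_k M → M`. -/
noncomputable def trTensor (k F M : Type*) [Field k] [Field F] [Algebra k F]
    [AddCommGroup M] [Module k M] : F ⊗[k] M →ₗ[k] M :=
  TensorProduct.lift ((LinearMap.lsmul k M).comp (Algebra.trace k F))

section TraceDual

variable (k F M : Type*) [Field k] [Field F] [Algebra k F] [FiniteDimensional k F]
  [Algebra.IsSeparable k F] [AddCommGroup M] [Module k M]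

noncomputable def traceDualEquiv : F ⊗[k] M ≃ₗ[k] (F →ₗ[k] M) :=
  TensorProduct.congr ((Algebra.traceForm k F).toDual (traceForm_nondegenerate k F))
    (LinearEquiv.refl k M) ≪≫ₗ dualTensorHomEquiv k F M

variable {k F M}

theorem traceDualEquiv_apply (x : F ⊗[k] M) (c : F) :
    traceDualEquiv k F M x c = trTensor k F M (c • x) := by
  induction x using TensorProduct.induction_on with
  | zero => simp
  | tmul a m =>
    simp [traceDualEquiv, trTensor, smul_tmul', dualTensorHomEquiv, LinearMap.BilinForm.toDual_def,
      Algebra.traceForm_apply, mul_comm]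
  | add x y hx hy => simp only [map_add, LinearMap.add_apply, smul_add, hx, hy]

theorem traceDualEquiv_smul (a : F) (x : F ⊗[k] M) (c : F) :
    traceDualEquiv k F M (a • x) c = traceDualEquiv k F M x (c * a) := by
  rw [traceDualEquiv_apply, traceDualEquiv_apply, smul_smul]

theorem eq_of_forall_trTensor_smul_eq {x y : F ⊗[k] M}
    (h : ∀ c : F, trTensor k F M (c • x) = trTensor k F M (c • y)) : x = y :=
  (traceDualEquiv k F M).injective <| LinearMap.ext fun c => by
    rw [traceDualEquiv_apply, traceDualEquiv_apply, h]

variable {N : Type*} [AddCommGroup N] [Module F N] [Module k N] [IsScalarTower k F N]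

theorem trTensor_comp_restrictScalars_injective :
    Function.Injective fun f : N →ₗ[F] F ⊗[k] M => (trTensor k F M).comp (f.restrictScalars k) := by
  intro f g hfg
  ext v
  refine eq_of_forall_trTensor_smul_eq fun c => ?_
  rw [← map_smul, ← map_smul]
  exact LinearMap.congr_fun hfg (c • v)

variable (F) in
noncomputable def trTensorLift (g : N →ₗ[k] M) : N →ₗ[F] F ⊗[k] M where
  toFun v :=
    (traceDualEquiv k F M).symm (g.comp ((LinearMap.toSpanSingleton F N v).restrictScalars k))
  map_add' v w := by
    rw [← map_add]
    congr 1
    ext c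
    simp
  map_smul' a v := (traceDualEquiv k F M).injective <| LinearMap.ext fun c => by
    simp [traceDualEquiv_smul, mul_smul]

theorem traceDualEquiv_trTensorLift (g : N →ₗ[k] M) (v : N) (c : F) :
    traceDualEquiv k F M (trTensorLift F g v) c = g (c • v) := by
  simp [trTensorLift]

theorem trTensor_comp_trTensorLift (g : N →ₗ[k] M) :
    (trTensor k F M).comp ((trTensorLift F g).restrictScalars k) = g := by
  ext v
  simpa [traceDualEquiv_apply] using traceDualEquiv_trTensorLift g v (1 : F)

theorem trTensor_comp_restrictScalars_bijective :
    Function.Bijective fun f : N →ₗ[F] F ⊗[k] M => (trTensor k F M).comp (f.restrictScalars k) :=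
  ⟨trTensor_comp_restrictScalars_injective,
    fun g => ⟨trTensorLift F g, trTensor_comp_trTensorLift g⟩⟩

end TraceDual

theorem stmt_0_general (k F M N : Type*) [Field k] [Field F] [Fintype F] [Algebra k F]
    [AddCommGroup M] [Module k M]
    [AddCommGroup N] [Module F N] [Module k N] [IsScalarTower k F N] :
    Function.Bijective
      (fun f : N →ₗ[F] (F ⊗[k] M) => (trTensor k F M).comp (f.restrictScalars k)) ∧
    ∀ (c : F) (f : N →ₗ[F] (F ⊗[k] M)) (v : N),
      ((trTensor k F M).comp ((c • f).restrictScalars k)) v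
        = ((trTensor k F M).comp (f.restrictScalars k)) (c • v) :=
  -- finite fields are perfect, so instance search makes `F/k` finite and separable
  ⟨trTensor_comp_restrictScalars_bijective, fun c f v => by simp⟩

/-- for a finite extension `F/k` of finite fields, any `k`-module `M` and any
finite-dimensional `F`-vector space `N`, the map `f ↦ (tr_{F/k} ⊗ id_M) ∘ f` is an
`F`-linear bijection `Hom_F(N, F ⊗_k M) ≃ Hom_k(N, M)`. -/
theorem stmt_0 (k F M N : Type*) [Field k] [Fintype k] [Field F] [Fintype F] [Algebra k F]
    [AddCommGroup M] [Module k M]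
    [AddCommGroup N] [Module F N] [Module k N] [IsScalarTower k F N]
    [FiniteDimensional F N] :
    Function.Bijective
      (fun f : N →ₗ[F] (F ⊗[k] M) => (trTensor k F M).comp (f.restrictScalars k)) ∧
    ∀ (c : F) (f : N →ₗ[F] (F ⊗[k] M)) (v : N),
      ((trTensor k F M).comp ((c • f).restrictScalars k)) v
        = ((trTensor k F M).comp (f.restrictScalars k)) (c • v) :=
  stmt_0_general k F M N
end

section
/- Let G be a finite group of order invertible in a commutative ring R, and M an R[G]-module. Then M is a projective R[G]-module if and only if M is projective as an R-module. -/
/-!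
Restricting scalars along `R → R[G]` preserves projectivity because `R[G]` is free over `R`.
Conversely, if `M` is `R`-projective then so is the `R[G]`-module `R[G] ⊗[R] M`, and the
multiplication map `R[G] ⊗[R] M → M` has the `R`-linear section `m ↦ 1 ⊗ m`. Averaging this
section over `G`, as in Maschke's theorem, turns it into an `R[G]`-linear section, so `M` is a
direct summand of a projective `R[G]`-module.
-/

open TensorProduct

theorem Module.Projective.trans {R : Type*} (A : Type*) {M : Type*} [CommSemiring R] [Semiring A]
    [Algebra R A] [AddCommMonoid M] [Module R M] [Module A M] [IsScalarTower R A M]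
    [Module.Projective R A] [Module.Projective A M] : Module.Projective R M := by
  classical
  obtain ⟨s, hs⟩ := ‹Module.Projective A M›
  have : Module.Projective R (M →₀ A) := .of_equiv' (finsuppLequivDFinsupp R).symm
  exact .of_split (s.restrictScalars R)
    ((Finsupp.linearCombination A id).restrictScalars R) (LinearMap.ext hs)

namespace LinearMap

variable {k G V W : Type*} [CommRing k] [Group G]
  [AddCommGroup V] [Module k V] [Module (MonoidAlgebra k G) V]
  [IsScalarTower k (MonoidAlgebra k G) V]
  [AddCommGroup W] [Module k W] [Module (MonoidAlgebra k G) W]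
  [IsScalarTower k (MonoidAlgebra k G) W]
  {π : W →ₗ[k] V} {q : V →ₗ[MonoidAlgebra k G] W}

theorem leftInverse_conjugate (h : Function.LeftInverse q π) (g : G) :
    Function.LeftInverse q (π.conjugate g) := fun w => by
  rw [conjugate_apply, q.map_smul, h, smul_smul, MonoidAlgebra.single_mul_single, one_mul,
    inv_mul_cancel, ← MonoidAlgebra.one_def, one_smul]

theorem leftInverse_equivariantProjection [Fintype G] (hcard : IsUnit (Nat.card G : k))
    (h : Function.LeftInverse q π) : Function.LeftInverse q (π.equivariantProjection G) :=
  fun w => by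
  rw [equivariantProjection_apply, q.map_smul_of_tower, map_sum]
  simp only [fun g => leftInverse_conjugate h g w]
  rw [Finset.sum_const, Finset.card_univ, ← Nat.cast_smul_eq_nsmul k, smul_smul,
    Fintype.card_eq_nat_card, Ring.inverse_mul_cancel _ hcard, one_smul]

end LinearMap

theorem MonoidAlgebra.projective_of_projective_of_isUnit_card {k G V : Type*} [CommRing k]
    [Group G] [Fintype G] (hcard : IsUnit (Nat.card G : k)) [AddCommGroup V] [Module k V]
    [Module (MonoidAlgebra k G) V] [IsScalarTower k (MonoidAlgebra k G) V]
    [Module.Projective k V] : Module.Projective (MonoidAlgebra k G) V := by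
  let mul : MonoidAlgebra k G ⊗[k] V →ₗ[MonoidAlgebra k G] V :=
    AlgebraTensorModule.lift (LinearMap.toSpanSingleton _ _ LinearMap.id)
  have mul_one_tmul : Function.LeftInverse mul (TensorProduct.mk k (MonoidAlgebra k G) V 1) :=
    fun v => by simp [mul]
  exact .of_split _ mul
    (LinearMap.ext (LinearMap.leftInverse_equivariantProjection hcard mul_one_tmul))

/-- Maschke-type criterion: let `G` be a finite group whose order is invertible
in a commutative ring `R`, and `M` an `R[G]`-module.  Then `M` is projective over `R[G]` if
and only if `M` is projective over `R`. -/
theorem stmt_3 (R : Type*) [CommRing R] (G : Type*) [Group G] [Fintype G]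
    (h : IsUnit (Fintype.card G : R))
    (M : Type*) [AddCommGroup M] [Module (MonoidAlgebra R G) M]
    [Module R M] [IsScalarTower R (MonoidAlgebra R G) M] :
    Module.Projective (MonoidAlgebra R G) M ↔ Module.Projective R M :=
  ⟨fun _ => .trans (MonoidAlgebra R G),
    fun _ => MonoidAlgebra.projective_of_projective_of_isUnit_card
      (Nat.card_eq_fintype_card (α := G) ▸ h)⟩
end

section
/- Let M/K_𝔭 be an unramified extension of local fields of characteristic p with residue field extension generated by Frobenius δ̄, and let L = M(ξ^{1/e}) be a totally tamely ramified cyclic degree-e extension of M with ζ ∈ M a primitive e-th root of unity. If the full extension L/K_𝔭 is abelian, then ζ lies in K_𝔭 (equivalently, the residue field κ of K_𝔭 contains a primitive e-th root of unity). -/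
/-!
For the Kummer generator `u` of `L/M`, the quotient `t = δ u / u` is a unit, and since `σ` and
`δ` commute, `σ t = (δ ζ / ζ) t`. As `σ` is inertial, `δ ζ / ζ` is an `e`-th root of unity
congruent to `1` modulo the maximal ideal, hence equal to `1` by Hensel. So `ζ` is fixed by `δ`,
and by `σ` because `ζ ∈ M`; these generate the Galois group, so `ζ` lies in the base field.
-/

theorem MulAction.smul_eq_self_of_mem_closure {G α : Type*} [Group G] [MulAction G α]
    {S : Set G} {a : α} (hS : ∀ g ∈ S, g • a = a) {g : G} (hg : g ∈ Subgroup.closure S) :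
    g • a = a :=
  (Subgroup.closure_le (stabilizer G a)).mpr hS hg

namespace Valuation

variable {L Γ : Type*} [Field L] [LinearOrderedCommGroupWithZero Γ] (v : Valuation L Γ)

theorem sub_one_lt_one_of_apply_eq_mul {f : L → L} (hf : ∀ x, v x ≤ 1 → v (f x - x) < 1)
    {t η : L} (ht : v t = 1) (hft : f t = η * t) : v (η - 1) < 1 := by
  have h := hf t ht.le
  rwa [hft, ← sub_one_mul, map_mul, ht, mul_one] at h

theorem apply_eq_self_of_commute_of_inertial {K : Type*} [Field K] [Algebra K L] {e : ℕ}
    (hensel : ∀ η : L, η ^ e = 1 → v (η - 1) < 1 → η = 1)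
    {σ δ : L ≃ₐ[K] L} (hcomm : Commute σ δ) (hδ : ∀ x, v (δ x) = v x)
    (hσ : ∀ x, v x ≤ 1 → v (σ x - x) < 1)
    {ζ u : L} (hζ : ζ ^ e = 1) (hu : u ≠ 0) (hσu : σ u = ζ * u) : δ ζ = ζ := by
  have hζ0 : ζ ≠ 0 := by
    rintro rfl
    exact hu (σ.injective (by rw [hσu, zero_mul, map_zero]))
  set η := δ ζ / ζ
  set t := δ u / u
  have hηe : η ^ e = 1 := by rw [div_pow, ← map_pow, hζ, map_one, div_one]
  have hvt : v t = 1 := by rw [map_div₀, hδ, div_self (v.ne_zero_iff.mpr hu)]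
  have hσt : σ t = η * t := by
    have hσδu : σ (δ u) = δ (σ u) := congrArg (· u) hcomm.eq
    rw [map_div₀, hσδu, hσu, map_mul, div_mul_div_comm]
  have hη : η = 1 := hensel η hηe (v.sub_one_lt_one_of_apply_eq_mul hσ hvt hσt)
  rwa [div_eq_one_iff_eq hζ0] at hη

end Valuation

theorem stmt_5_general (e : ℕ)
    (K L : Type*) [Field K] [Field L] [Algebra K L]
    [FiniteDimensional K L] [IsGalois K L]
    (hab : ∀ σ τ : L ≃ₐ[K] L, σ * τ = τ * σ)
    (M : IntermediateField K L)
    (Γ : Type*) [LinearOrderedCommGroupWithZero Γ]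
    (v : Valuation L Γ)
    (hGal : ∀ (τ : L ≃ₐ[K] L) (x : L), v (τ x) = v x)
    (hhensel : ∀ η : L, η ^ e = 1 → v (η - 1) < 1 → η = 1)
    (ζ : L) (hζM : ζ ∈ M) (hζ : IsPrimitiveRoot ζ e)
    (u : L) (hu0 : u ≠ 0)
    (σ δ : L ≃ₐ[K] L) (hσM : ∀ x ∈ M, σ x = x) (hσu : σ u = ζ * u)
    (hσin : ∀ x : L, v x ≤ 1 → v (σ x - x) < 1)
    (hgen : Subgroup.closure {σ, δ} = ⊤) :
    ζ ∈ (⊥ : IntermediateField K L) := by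
  have hδζ : δ ζ = ζ := v.apply_eq_self_of_commute_of_inertial hhensel (hab σ δ) (hGal δ) hσin
    hζ.pow_eq_one hu0 hσu
  refine (IsGalois.mem_bot_iff_fixed ζ).mpr fun g ↦
    MulAction.smul_eq_self_of_mem_closure (S := {σ, δ}) ?_ (hgen ▸ Subgroup.mem_top g)
  rintro g (rfl | rfl)
  exacts [hσM ζ hζM, hδζ]

/-- let `L/K` be an abelian Galois extension of local fields of residue
characteristic `p` (the valuation `v` on `L` is Galois-invariant), `M` an intermediate field,
`ζ ∈ M` a primitive `e`-th root of unity with `e` prime to `p`, `u` an `e`-th root of an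
element `ξ ∈ M` (a uniformizer of the maximal unramified subextension situation), and
`σ ∈ Gal(L/M)` an inertial automorphism with `σ(u) = ζ·u`.  If `δ` is a lift of the Frobenius
so that `σ` and `δ` generate `Gal(L/K)`, then `ζ` lies in `K`.  The henselian property of the
local field (roots of unity of order prime to `p` are distinguished modulo the maximal ideal)
is recorded as the hypothesis `hhensel`, and inertiality of `σ` as `hσin`. -/
theorem stmt_5 (p e : ℕ) (hp : p.Prime) (he : ¬ p ∣ e) (he0 : 0 < e)
    (K L : Type*) [Field K] [Field L] [Algebra K L] [CharP K p]
    [FiniteDimensional K L] [IsGalois K L]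
    (hab : ∀ σ τ : L ≃ₐ[K] L, σ * τ = τ * σ)
    (M : IntermediateField K L)
    (Γ : Type*) [LinearOrderedCommGroupWithZero Γ]
    (v : Valuation L Γ)
    (hGal : ∀ (τ : L ≃ₐ[K] L) (x : L), v (τ x) = v x)
    (hhensel : ∀ η : L, η ^ e = 1 → v (η - 1) < 1 → η = 1)
    (ζ : L) (hζM : ζ ∈ M) (hζ : IsPrimitiveRoot ζ e)
    (ξ : L) (hξM : ξ ∈ M) (u : L) (hu : u ^ e = ξ) (hu0 : u ≠ 0)
    (σ δ : L ≃ₐ[K] L) (hσM : ∀ x ∈ M, σ x = x) (hσu : σ u = ζ * u)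
    (hσin : ∀ x : L, v x ≤ 1 → v (σ x - x) < 1)
    (hgen : Subgroup.closure {σ, δ} = ⊤) :
    ζ ∈ (⊥ : IntermediateField K L) :=
  stmt_5_general e K L hab M Γ v hGal hhensel ζ hζM hζ u hu0 σ δ hσM hσu hσin hgen
end

section
/- Let G be a finite abelian group of order prime to char k, where k is an algebraically closed field. Let N be a finite-dimensional k[G]-module and φ a k[t][G]-linear endomorphism of a finitely generated free k[t][G]-module M. Then the determinant over k[t] of the induced endomorphism φ* on Hom_{k[G]}(N, M) equals det_{k[t]}( det_{k[t][G]}(φ, M) acting on N ⊗_k k[t] ). -/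
open TensorProduct

noncomputable section

namespace Stmt8

variable (k : Type*) [Field k] (G : Type*) [CommGroup G] [Fintype G]

/-- The canonical map `k[G] → k[t][G]`. -/
def BtoA : MonoidAlgebra k G →ₐ[k] MonoidAlgebra (Polynomial k) G :=
  MonoidAlgebra.lift k _ G (MonoidAlgebra.of (Polynomial k) G)

/-- `k[t][G]` as a `k[G]`-module, via `k[G] → k[t][G]`. -/
instance : Module (MonoidAlgebra k G) (MonoidAlgebra (Polynomial k) G) :=
  Module.compHom _ (BtoA k G).toRingHom

instance : IsScalarTower (MonoidAlgebra k G) (MonoidAlgebra (Polynomial k) G)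
    (MonoidAlgebra (Polynomial k) G) :=
  ⟨fun b a c => by
    show (BtoA k G b * a) * c = BtoA k G b * (a * c)
    rw [mul_assoc]⟩

instance : SMulCommClass (MonoidAlgebra k G) (Polynomial k)
    (MonoidAlgebra (Polynomial k) G) :=
  ⟨fun b p a => by
    show BtoA k G b * (p • a) = p • (BtoA k G b * a)
    exact mul_smul_comm p _ a⟩

variable (N : Type*) [AddCommGroup N] [Module (MonoidAlgebra k G) N]
  [Module k N] [IsScalarTower k (MonoidAlgebra k G) N] [FiniteDimensional k N]

instance smulCommN : SMulCommClass (MonoidAlgebra k G) k N :=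
  ⟨fun b c w => by
    rw [← algebraMap_smul (MonoidAlgebra k G) c w,
      ← algebraMap_smul (MonoidAlgebra k G) c (b • w), smul_smul, smul_smul, mul_comm]⟩

/-- The representation of `G` on `N` underlying its `k[G]`-module structure. -/
def gRep : Representation k G N where
  toFun g :=
    { toFun := fun x => MonoidAlgebra.of k G g • x
      map_add' := fun x y => smul_add _ x y
      map_smul' := fun c x => by simpa using smul_comm (MonoidAlgebra.of k G g) c x }
  map_one' := by
    ext x
    show MonoidAlgebra.of k G 1 • x = x
    rw [map_one, one_smul]
  map_mul' g h := by
    ext x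
    show MonoidAlgebra.of k G (g * h) • x = _
    rw [map_mul, mul_smul]
    rfl

/-- The base-changed representation of `G` on `N ⊗_k k[t] = N[t]`. -/
def gRepT : G →* Module.End (Polynomial k) (Polynomial k ⊗[k] N) where
  toFun g := (gRep k G N g).baseChange (Polynomial k)
  map_one' := by
    show LinearMap.baseChange (Polynomial k) ((gRep k G N) 1) = 1
    rw [map_one, Module.End.one_eq_id, LinearMap.baseChange_id]
    rfl
  map_mul' g h := by
    show LinearMap.baseChange (Polynomial k) ((gRep k G N) (g * h)) = _
    rw [map_mul, Module.End.mul_eq_comp, LinearMap.baseChange_comp]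
    rfl

/-- The action of `k[t][G]` on `N[t]` extending the `G`-action on `N`. -/
def act : MonoidAlgebra (Polynomial k) G →ₐ[Polynomial k]
    Module.End (Polynomial k) (Polynomial k ⊗[k] N) :=
  MonoidAlgebra.lift (Polynomial k) _ G (gRepT k G N)

/-- let `k` be algebraically closed, `G` a finite abelian group of order prime
to `char k`, `N` a finite-dimensional `k[G]`-module, and `φ` a `k[t][G]`-linear endomorphism
of a finitely generated free `k[t][G]`-module `M = (k[t][G])^ι`.  Then the `k[t]`-determinant
of the induced endomorphism `φ^*` of `Hom_{k[G]}(N, M)` equals the `k[t]`-determinant of the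
element `det_{k[t][G]}(φ, M) ∈ k[t][G]` acting on `N ⊗_k k[t]`. -/
def homMap (ι : Type*) [Fintype ι]
    (φ : (ι → MonoidAlgebra (Polynomial k) G) →ₗ[MonoidAlgebra (Polynomial k) G]
      (ι → MonoidAlgebra (Polynomial k) G)) :
    (N →ₗ[MonoidAlgebra k G] (ι → MonoidAlgebra (Polynomial k) G)) →ₗ[Polynomial k]
    (N →ₗ[MonoidAlgebra k G] (ι → MonoidAlgebra (Polynomial k) G)) where
  toFun f := (φ.restrictScalars (MonoidAlgebra k G)) ∘ₗ f
  map_add' f g := by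
    ext x
    simp
  map_smul' p f := by
    ext x
    simp


/-!
As `|G|` is invertible and `k` is algebraically closed, the idempotents
`e_χ = |G|⁻¹ ∑ g, χ(g)⁻¹ g`, one for each character `χ : G → kˣ`, sum to `1`, so `N` has a basis
`b_j` of simultaneous eigenvectors, `G` acting on `b_j` through a character `χ_j`.
A `k[G]`-linear `f : N → k[t][G]^ι` is determined by the `f (b_j)`, and every coordinate of
`f (b_j)` lies in the `χ_j`-eigenline `k[t] • e_{χ_j}` of `k[t][G]`. Reading these coordinates off
through `χ_j` identifies `Hom_{k[G]}(N, M)` with `∏ j, k[t]^ι`, where `φ^*` acts on the `j`-th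
factor by the matrix of `φ` with `χ_j` applied entrywise. So `det φ^* = ∏ j, χ_j (det φ)`, which is
also the determinant of `det φ` acting on `N[t]`, diagonally in the basis `1 ⊗ b_j`.
-/

open MonoidAlgebra

lemma _root_.LinearMap.det_eq_prod_of_apply_basis {R M ι : Type*} [CommRing R] [AddCommGroup M]
    [Module R M] [Fintype ι] [DecidableEq ι] (b : Module.Basis ι R M) (f : M →ₗ[R] M)
    (d : ι → R) (hf : ∀ i, f (b i) = d i • b i) : LinearMap.det f = ∏ i, d i := by
  have hmat : LinearMap.toMatrix b b f = Matrix.diagonal d := by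
    ext i j
    rw [LinearMap.toMatrix_apply, hf, map_smul, b.repr_self, Finsupp.smul_apply,
      Finsupp.single_apply, Matrix.diagonal_apply, smul_eq_mul]
    split_ifs <;> simp_all
  rw [← LinearMap.det_toMatrix b, hmat, Matrix.det_diagonal]

section Characters

variable {k G} (S : Type*) [CommRing S] [Algebra k S]

def charEval (χ : G →* kˣ) : S[G] →ₐ[S] S :=
  lift S S G ((algebraMap k S : k →* S).comp ((Units.coeHom k).comp χ))

omit [Fintype G] in
lemma charEval_single (χ : G →* kˣ) (g : G) (s : S) :
    charEval S χ (single g s) = s * algebraMap k S (χ g) := by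
  simp [charEval, lift_single]

omit [Fintype G] in
lemma smul_eq_charEval_smul (χ : G →* kˣ) {P : Type*} [AddCommGroup P] [Module S P]
    [Module S[G] P] [IsScalarTower S S[G] P] {w : P}
    (hw : ∀ g, of S G g • w = algebraMap k S (χ g) • w) (a : S[G]) :
    a • w = charEval S χ a • w := by
  induction a using MonoidAlgebra.induction_linear with
  | zero => simp
  | add a b ha hb => rw [add_smul, ha, hb, map_add, add_smul]
  | single g s =>
    rw [single_eq_algebraMap_mul_of, mul_smul, hw, algebraMap_smul, ← single_eq_algebraMap_mul_of,
      charEval_single, mul_smul]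

def charIdem (χ : G →* kˣ) : S[G] :=
  ∑ g, single g (algebraMap k S ((Fintype.card G : k)⁻¹ * (χ g⁻¹ : k)))

lemma of_mul_charIdem (χ : G →* kˣ) (g : G) :
    of S G g * charIdem S χ = algebraMap k S (χ g) • charIdem S χ := by
  rw [charIdem, Finset.mul_sum, Finset.smul_sum]
  refine Fintype.sum_equiv (Equiv.mulLeft g) _ _ fun h => ?_
  rw [of_apply, single_mul_single, one_mul, smul_single', ← map_mul, Equiv.coe_mulLeft]
  congr 2
  simp only [mul_inv_rev, map_mul, map_inv, Units.val_mul, Units.val_inv_eq_inv_val]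
  field_simp

lemma mul_charIdem (χ : G →* kˣ) (a : S[G]) : a * charIdem S χ = charEval S χ a • charIdem S χ :=
  smul_eq_charEval_smul S χ (of_mul_charIdem S χ) a

lemma charEval_charIdem (χ ψ : G →* kˣ) :
    charEval S χ (charIdem S ψ)
      = algebraMap k S ((Fintype.card G : k)⁻¹ * ∑ g, ((χ * ψ⁻¹) g : k)) := by
  rw [charIdem, map_sum]
  simp only [charEval_single, ← map_mul, ← map_sum]
  rw [Finset.mul_sum]
  congr 1
  refine Finset.sum_congr rfl fun g _ => ?_
  simp [mul_comm, mul_left_comm]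

variable {S} in
lemma charEval_charIdem_self (hchar : (Fintype.card G : k) ≠ 0) (χ : G →* kˣ) :
    charEval S χ (charIdem S χ) = 1 := by
  simp [charEval_charIdem, hchar]

lemma charEval_charIdem_of_ne {χ ψ : G →* kˣ} (h : ψ ≠ χ) : charEval S χ (charIdem S ψ) = 0 := by
  have hne : (Units.coeHom k).comp (χ * ψ⁻¹) ≠ 1 := fun h1 =>
    h (mul_inv_eq_one.mp (MonoidHom.ext fun g => Units.ext (DFunLike.congr_fun h1 g))).symm
  have hsum : ∑ g, ((χ * ψ⁻¹) g : k) = 0 := sum_hom_units_eq_zero _ hne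
  rw [charEval_charIdem, hsum, mul_zero, map_zero]

lemma eq_charEval_smul_charIdem (hchar : (Fintype.card G : k) ≠ 0) {χ : G →* kˣ} {a : S[G]}
    (ha : ∀ g, of S G g * a = algebraMap k S (χ g) • a) : a = charEval S χ a • charIdem S χ :=
  calc a = charEval S χ (charIdem S χ) • a := by rw [charEval_charIdem_self hchar, one_smul]
    _ = charIdem S χ * a := (smul_eq_charEval_smul S χ ha _).symm
    _ = charEval S χ a • charIdem S χ := by rw [mul_comm, mul_charIdem]

lemma sum_charIdem [Fintype (G →* kˣ)] [HasEnoughRootsOfUnity k (Monoid.exponent G)]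
    (hchar : (Fintype.card G : k) ≠ 0) : ∑ χ : G →* kˣ, charIdem k χ = 1 := by
  simp only [charIdem, Algebra.algebraMap_self, RingHom.id_apply]
  rw [Finset.sum_comm, one_def]
  simp_rw [← singleAddHom_apply, ← map_sum, singleAddHom_apply]
  -- the coefficient of `g` is `|G|⁻¹ ∑ χ, χ g⁻¹`, and this character sum vanishes unless `g = 1`
  refine (Finset.sum_eq_single 1 (fun g _ hg => ?_) (by simp)).trans ?_
  · obtain ⟨ψ, hψ⟩ := CommGroup.exists_apply_ne_one_of_hasEnoughRootsOfUnity G k (inv_ne_one.mpr hg)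
    have hne : (Units.coeHom k).comp (MonoidHom.eval g⁻¹) ≠ 1 := fun h =>
      hψ (Units.ext (DFunLike.congr_fun h ψ))
    have hsum : ∑ χ : G →* kˣ, (χ g⁻¹ : k) = 0 := sum_hom_units_eq_zero _ hne
    rw [← Finset.mul_sum, hsum, mul_zero, single_zero]
  · have hcard : Fintype.card (G →* kˣ) = Fintype.card G := by
      simpa [Nat.card_eq_fintype_card] using CommGroup.card_monoidHom_of_hasEnoughRootsOfUnity G k
    simp [hcard, hchar]

end Characters

section CharSpace

variable {k G} {V W : Type*} [AddCommGroup V] [Module k V] [Module k[G] V] [IsScalarTower k k[G] V]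
  [AddCommGroup W] [Module k W] [Module k[G] W] [IsScalarTower k k[G] W]

variable (V) in
def charSpace (χ : G →* kˣ) : Submodule k V where
  carrier := {v | ∀ g, of k G g • v = (χ g : k) • v}
  add_mem' hv hw g := by rw [smul_add, hv g, hw g, smul_add]
  zero_mem' g := by rw [smul_zero, smul_zero]
  smul_mem' c v hv g := by rw [smul_comm, hv g, smul_comm]

omit [Fintype G] in
lemma smul_of_mem_charSpace {χ : G →* kˣ} {v : V} (hv : v ∈ charSpace V χ) (a : k[G]) :
    a • v = charEval k χ a • v :=
  smul_eq_charEval_smul k χ hv a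

omit [Fintype G] in
lemma map_mem_charSpace (f : V →ₗ[k[G]] W) {χ : G →* kˣ} {v : V}
    (hv : v ∈ charSpace V χ) : f v ∈ charSpace W χ := fun g => by
  rw [← map_smul, hv g, LinearMap.map_smul_of_tower]

omit [Fintype G] in
lemma exists_linearMap_apply_basis_of_mem_charSpace {J : Type*} (b : Module.Basis J k V)
    {χ : J → G →* kˣ} (hb : ∀ j, b j ∈ charSpace V (χ j)) (w : J → W)
    (hw : ∀ j, w j ∈ charSpace W (χ j)) : ∃ f : V →ₗ[k[G]] W, ∀ j, f (b j) = w j := by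
  refine ⟨equivariantOfLinearOfComm (b.constr k w) fun g v => ?_, b.constr_basis k w⟩
  have hcomm : b.constr k w ∘ₗ GroupSMul.linearMap k V g
      = GroupSMul.linearMap k W g ∘ₗ b.constr k w :=
    b.ext fun j => by
      simp only [LinearMap.comp_apply, GroupSMul.linearMap_apply, b.constr_basis, ← of_apply]
      rw [hb j g, map_smul, b.constr_basis, hw j g]
  exact LinearMap.congr_fun hcomm v

lemma charIdem_smul_mem_charSpace (χ : G →* kˣ) (v : V) : charIdem k χ • v ∈ charSpace V χ :=
  fun g => by rw [← mul_smul, of_mul_charIdem, smul_assoc]; rfl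

lemma iSupIndep_charSpace (hchar : (Fintype.card G : k) ≠ 0) :
    iSupIndep fun χ : G →* kˣ => charSpace V χ := by
  intro χ
  rw [Submodule.disjoint_def]
  intro v hv hv'
  have hker : (⨆ (ψ) (_ : ψ ≠ χ), charSpace V ψ)
      ≤ LinearMap.ker (DistribSMul.toLinearMap k V (charIdem k χ)) :=
    iSup₂_le fun ψ hψ w hw => by
      rw [LinearMap.mem_ker, DistribSMul.toLinearMap_apply, smul_of_mem_charSpace hw,
        charEval_charIdem_of_ne k hψ.symm, zero_smul]
  rw [← one_smul k v, ← charEval_charIdem_self (S := k) hchar χ, ← smul_of_mem_charSpace hv]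
  exact hker hv'

lemma iSup_charSpace_eq_top [HasEnoughRootsOfUnity k (Monoid.exponent G)]
    (hchar : (Fintype.card G : k) ≠ 0) : ⨆ χ : G →* kˣ, charSpace V χ = ⊤ := by
  have := Fintype.ofFinite (G →* kˣ)
  refine eq_top_iff.mpr fun v _ => ?_
  rw [← one_smul k[G] v, ← sum_charIdem hchar, Finset.sum_smul]
  exact Submodule.sum_mem _ fun χ _ =>
    Submodule.mem_iSup_of_mem χ (charIdem_smul_mem_charSpace χ v)

lemma exists_basis_mem_charSpace [FiniteDimensional k V]
    [HasEnoughRootsOfUnity k (Monoid.exponent G)] (hchar : (Fintype.card G : k) ≠ 0) :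
    ∃ (n : ℕ) (b : Module.Basis (Fin n) k V) (χ : Fin n → G →* kˣ),
      ∀ j, b j ∈ charSpace V (χ j) := by
  classical
  have := Fintype.ofFinite (G →* kˣ)
  have hint : DirectSum.IsInternal fun χ : G →* kˣ => charSpace V χ :=
    DirectSum.isInternal_submodule_of_iSupIndep_of_iSup_eq_top
      (iSupIndep_charSpace hchar) (iSup_charSpace_eq_top hchar)
  let b := hint.collectedBasis fun χ => Module.finBasis k (charSpace V χ)
  let e := Fintype.equivFin (Σ χ : G →* kˣ, Fin (Module.finrank k (charSpace V χ)))
  exact ⟨_, b.reindex e, fun j => (e.symm j).1, fun j => by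
    rw [Module.Basis.reindex_apply]
    exact hint.collectedBasis_mem _ (e.symm j)⟩

end CharSpace

section HomSide

variable {k G} {V : Type*} [AddCommGroup V] [Module k V] [Module k[G] V] [IsScalarTower k k[G] V]

instance : IsScalarTower k k[G] (Polynomial k)[G] :=
  ⟨fun c b a => by
    show BtoA k G (c • b) * a = c • (BtoA k G b * a)
    rw [map_smul, smul_mul_assoc]⟩

omit [Fintype G] in
lemma of_smul_eq_of_mul (g : G) (a : (Polynomial k)[G]) :
    of k G g • a = of (Polynomial k) G g * a := by
  show BtoA k G (of k G g) * a = _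
  rw [BtoA, lift_of]

lemma eq_charEval_smul_charIdem_of_mem_charSpace (hchar : (Fintype.card G : k) ≠ 0)
    {χ : G →* kˣ} {a : (Polynomial k)[G]} (ha : a ∈ charSpace (Polynomial k)[G] χ) :
    a = charEval (Polynomial k) χ a • charIdem (Polynomial k) χ :=
  eq_charEval_smul_charIdem _ hchar fun g => by rw [← of_smul_eq_of_mul, ha g, algebraMap_smul]

lemma smul_charIdem_mem_charSpace (χ : G →* kˣ) (p : Polynomial k) :
    p • charIdem (Polynomial k) χ ∈ charSpace (Polynomial k)[G] χ := fun g => by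
  rw [of_smul_eq_of_mul, mul_smul_comm, of_mul_charIdem, algebraMap_smul, smul_comm]

variable (ι : Type*) {J : Type*}

def homCoords (b : J → V) (χ : J → G →* kˣ) :
    (V →ₗ[k[G]] (ι → (Polynomial k)[G])) →ₗ[Polynomial k] (J → ι → Polynomial k) where
  toFun f j i := charEval (Polynomial k) (χ j) (f (b j) i)
  map_add' f f' := by ext j i; simp
  map_smul' p f := by ext j i; simp

omit [Fintype G] [Module k V] [IsScalarTower k k[G] V] in
lemma homCoords_comp_homMap [Fintype ι] [DecidableEq ι] (b : J → V) (χ : J → G →* kˣ)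
    (φ : (ι → (Polynomial k)[G]) →ₗ[(Polynomial k)[G]] (ι → (Polynomial k)[G])) :
    homCoords ι b χ ∘ₗ homMap k G V ι φ
      = LinearMap.pi (fun j => Matrix.toLin'
          ((LinearMap.toMatrix' φ).map (charEval (Polynomial k) (χ j))) ∘ₗ LinearMap.proj j)
        ∘ₗ homCoords ι b χ := by
  refine LinearMap.ext fun f => funext fun j => funext fun i => ?_
  simp only [homCoords, homMap, LinearMap.comp_apply, LinearMap.coe_mk, AddHom.coe_mk,
    LinearMap.pi_apply, LinearMap.proj_apply, Matrix.toLin'_apply, LinearMap.coe_restrictScalars]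
  rw [← LinearMap.toMatrix'_mulVec φ]
  exact RingHom.map_mulVec (charEval (Polynomial k) (χ j)).toRingHom _ _ i

lemma homCoords_bijective (hchar : (Fintype.card G : k) ≠ 0) (b : Module.Basis J k V)
    {χ : J → G →* kˣ} (hb : ∀ j, b j ∈ charSpace V (χ j)) :
    Function.Bijective (homCoords ι b χ) := by
  constructor
  · intro f f' h
    have hmem (f : V →ₗ[k[G]] (ι → (Polynomial k)[G])) j i :
        f (b j) i ∈ charSpace (Polynomial k)[G] (χ j) :=
      map_mem_charSpace (LinearMap.proj i) (map_mem_charSpace f (hb j))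
    have hval : ∀ j i, f (b j) i = f' (b j) i := fun j i => by
      rw [eq_charEval_smul_charIdem_of_mem_charSpace hchar (hmem f j i),
        eq_charEval_smul_charIdem_of_mem_charSpace hchar (hmem f' j i)]
      exact congrArg (· • _) (congrFun (congrFun h j) i)
    exact LinearMap.restrictScalars_injective k (b.ext fun j => funext (hval j))
  · intro c
    obtain ⟨f, hf⟩ := exists_linearMap_apply_basis_of_mem_charSpace b hb
      (fun j i => c j i • charIdem (Polynomial k) (χ j))
      (fun j g => funext fun i => smul_charIdem_mem_charSpace (χ j) (c j i) g)
    refine ⟨f, funext fun j => funext fun i => ?_⟩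
    simp [homCoords, hf, charEval_charIdem_self hchar]

lemma det_homMap_eq_prod [Fintype ι] [Fintype J] (hchar : (Fintype.card G : k) ≠ 0)
    (b : Module.Basis J k V) {χ : J → G →* kˣ} (hb : ∀ j, b j ∈ charSpace V (χ j))
    (φ : (ι → (Polynomial k)[G]) →ₗ[(Polynomial k)[G]] (ι → (Polynomial k)[G])) :
    LinearMap.det (A := Polynomial k) (M := V →ₗ[k[G]] (ι → (Polynomial k)[G]))
      (homMap k G V ι φ) = ∏ j, charEval (Polynomial k) (χ j) (LinearMap.det φ) := by
  classical
  let e := LinearEquiv.ofBijective _ (homCoords_bijective ι hchar b hb)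
  have hconj : e.toLinearMap ∘ₗ homMap k G V ι φ ∘ₗ e.symm.toLinearMap
      = LinearMap.pi (fun j => Matrix.toLin'
          ((LinearMap.toMatrix' φ).map (charEval (Polynomial k) (χ j))) ∘ₗ LinearMap.proj j) := by
    refine LinearMap.ext fun c => ?_
    obtain ⟨f, rfl⟩ := e.surjective c
    simpa [e] using LinearMap.congr_fun (homCoords_comp_homMap ι b χ φ) f
  rw [← LinearMap.det_conj _ e, hconj, LinearMap.det_pi]
  refine Finset.prod_congr rfl fun j _ => ?_
  rw [LinearMap.det_toLin', ← LinearMap.det_toMatrix' φ]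
  exact (RingHom.map_det (charEval (Polynomial k) (χ j)).toRingHom _).symm

end HomSide

section ActSide

variable {k G} {V : Type*} [AddCommGroup V] [Module k V] [Module k[G] V] [IsScalarTower k k[G] V]

omit [Fintype G] in
lemma act_tmul_of_mem_charSpace {χ : G →* kˣ} {v : V} (hv : v ∈ charSpace V χ)
    (a : (Polynomial k)[G]) :
    act k G V a (1 ⊗ₜ v) = charEval (Polynomial k) χ a • (1 ⊗ₜ v) := by
  induction a using MonoidAlgebra.induction_linear with
  | zero => simp
  | add a a' ha ha' => rw [map_add, map_add, LinearMap.add_apply, ha, ha', add_smul]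
  | single g p =>
    have hg : gRepT k G V g (1 ⊗ₜ v) = (χ g : k) • (1 ⊗ₜ v) := by
      rw [← TensorProduct.tmul_smul, ← hv g]
      exact LinearMap.baseChange_tmul _ _ _
    rw [act, lift_single, LinearMap.smul_apply, hg, charEval_single, mul_smul, algebraMap_smul]

omit [Fintype G] in
lemma det_act_eq_prod {J : Type*} [Fintype J] (b : Module.Basis J k V) {χ : J → G →* kˣ}
    (hb : ∀ j, b j ∈ charSpace V (χ j)) (a : (Polynomial k)[G]) :
    LinearMap.det (act k G V a) = ∏ j, charEval (Polynomial k) (χ j) a := by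
  classical
  refine LinearMap.det_eq_prod_of_apply_basis (b.baseChange (Polynomial k)) _ _ fun j => ?_
  rw [Module.Basis.baseChange_apply, act_tmul_of_mem_charSpace (hb j)]

end ActSide

theorem stmt_8 [IsAlgClosed k] (hchar : (Fintype.card G : k) ≠ 0)
    (ι : Type*) [Fintype ι]
    (φ : (ι → MonoidAlgebra (Polynomial k) G) →ₗ[MonoidAlgebra (Polynomial k) G]
      (ι → MonoidAlgebra (Polynomial k) G)) :
    LinearMap.det (A := Polynomial k)
        (M := N →ₗ[MonoidAlgebra k G] (ι → MonoidAlgebra (Polynomial k) G))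
        (homMap k G N ι φ)
      = LinearMap.det (A := Polynomial k) (M := Polynomial k ⊗[k] N)
          (act k G N (LinearMap.det φ)) := by
  have : NeZero (Fintype.card G : k) := ⟨hchar⟩
  have : HasEnoughRootsOfUnity k (Monoid.exponent G) :=
    HasEnoughRootsOfUnity.of_dvd k Group.exponent_dvd_card
  obtain ⟨n, b, χ, hb⟩ := exists_basis_mem_charSpace (V := N) hchar
  rw [det_homMap_eq_prod ι hchar b hb, det_act_eq_prod b hb]

end Stmt8
end
end
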